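/- arXiv:2203.12063 — 6 statements merged into one kernel-verified Lean document; each statement's English description precedes it below -/
import Mathlib

section
/- If Δ is a d-representable simplicial complex on [n] and σ ⊆ [n] has size at least d+2, then σ is a face of Δ if and only if every subset of σ of size d+1 is a face of Δ. -/
/-- If Δ is a d-representable complex on [n] and σ has size at least d+2,
then σ ∈ Δ iff every subset of σ of size d+1 is in Δ. -/
theorem representable_determined_by_skeleton_faces (n d : ℕ) (Δ : Set (Finset (Fin n)))
    (hΔ : ∃ C : Fin n → Set (Fin d → ℝ), (∀ i, Convex ℝ (C i)) ∧
      ∀ σ : Finset (Fin n), σ ∈ Δ ↔ (⋂ i ∈ σ, C i).Nonempty)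
    (σ : Finset (Fin n)) (hσ : d + 2 ≤ σ.card) :
    σ ∈ Δ ↔ ∀ τ ⊆ σ, τ.card = d + 1 → τ ∈ Δ := by
  obtain ⟨C, hconv, hnerve⟩ := hΔ
  constructor
  · intro h τ hτ hcard
    rw [hnerve] at h ⊢
    exact h.mono (Set.biInter_subset_biInter_left hτ)
  · intro h
    rw [hnerve]
    have hd : Module.finrank ℝ (Fin d → ℝ) = d := by simp
    apply Convex.helly_theorem (𝕜 := ℝ)
    · rw [hd]; omega
    · exact fun i _ ↦ hconv i
    · intro I hI hIcard
      rw [← hnerve]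
      exact h I hI (by rw [hd] at hIcard; exact hIcard)
end

section
/- A d-representable simplicial complex is determined by its d-skeleton: if Δ and Δ' are d-representable complexes on [n] with the same faces of dimension at most d, then Δ = Δ'. -/
/-- A d-representable complex is determined by its d-skeleton. -/
theorem representable_eq_of_skeleton_eq (n d : ℕ) (Δ Δ' : Set (Finset (Fin n)))
    (hΔ : ∃ C : Fin n → Set (Fin d → ℝ), (∀ i, Convex ℝ (C i)) ∧
      ∀ σ : Finset (Fin n), σ ∈ Δ ↔ (⋂ i ∈ σ, C i).Nonempty)
    (hΔ' : ∃ C : Fin n → Set (Fin d → ℝ), (∀ i, Convex ℝ (C i)) ∧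
      ∀ σ : Finset (Fin n), σ ∈ Δ' ↔ (⋂ i ∈ σ, C i).Nonempty)
    (hskel : ∀ σ : Finset (Fin n), σ.card ≤ d + 1 → (σ ∈ Δ ↔ σ ∈ Δ')) :
    Δ = Δ' := by
  obtain ⟨C, hCconv, hC⟩ := hΔ
  obtain ⟨C', hC'conv, hC'⟩ := hΔ'
  have hfr : Module.finrank ℝ (Fin d → ℝ) = d := by simp
  have key : ∀ (D : Fin n → Set (Fin d → ℝ)), (∀ i, Convex ℝ (D i)) →
      ∀ (E : Set (Finset (Fin n))), (∀ σ, σ ∈ E ↔ (⋂ i ∈ σ, D i).Nonempty) →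
      ∀ σ : Finset (Fin n), (∀ τ ⊆ σ, τ.card ≤ d + 1 → τ ∈ E) →
      (⋂ i ∈ σ, D i).Nonempty := by
    intro D hDconv E hE σ h
    apply Convex.helly_theorem' (fun i _ => hDconv i)
    intro I hI hIcard
    rw [hfr] at hIcard
    exact (hE I).mp (h I hI hIcard)
  ext σ
  constructor
  · intro hσ
    rw [hC']
    apply key C' hC'conv Δ' hC'
    intro τ hτ hτcard
    rw [← hskel τ hτcard, hC]
    exact ((hC σ).mp hσ).mono (Set.biInter_mono hτ fun _ _ => subset_rfl)
  · intro hσ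
    rw [hC]
    apply key C hCconv Δ hC
    intro τ hτ hτcard
    rw [hskel τ hτcard, hC']
    exact ((hC' σ).mp hσ).mono (Set.biInter_mono hτ fun _ _ => subset_rfl)
end

section
/- Let V and W be disjoint finite sets, and for each w ∈ W let Δ_w be a (d−1)-collapsible simplicial complex on vertex set V. Then the simplicial complex Δ = 2^V ∪ ⋃_{w∈W} (Δ_w ∗ w) on vertex set V ⊔ W is d-collapsible. -/
/-- A (finite) simplicial complex: a family of finite sets closed under subsets. -/
def IsComplex {α : Type*} (K : Finset (Finset α)) : Prop :=
  ∀ σ ∈ K, ∀ τ ⊆ σ, τ ∈ K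

/-- A facet of `K` is a maximal face. -/
def IsFacet {α : Type*} (K : Finset (Finset α)) (τ : Finset α) : Prop :=
  τ ∈ K ∧ ∀ ρ ∈ K, τ ⊆ ρ → ρ = τ

/-- A free face: a face contained in a unique facet. -/
def IsFreeFace {α : Type*} (K : Finset (Finset α)) (σ : Finset α) : Prop :=
  σ ∈ K ∧ ∃! τ : Finset α, IsFacet K τ ∧ σ ⊆ τ

/-- `Collapsible d K`: K can be reduced to the empty complex by repeatedly deleting
a free face of dimension at most d−1 (i.e. cardinality at most d) together with
all faces containing it. -/
inductive Collapsible {α : Type*} [DecidableEq α] (d : ℕ) : Finset (Finset α) → Prop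
  | empty : Collapsible d ∅
  | step (K : Finset (Finset α)) (σ : Finset α) (h1 : IsFreeFace K σ) (h2 : σ.card ≤ d)
      (h3 : Collapsible d (K.filter fun ρ => ¬ σ ⊆ ρ)) : Collapsible d K

lemma powerset_collapsible {α : Type*} [DecidableEq α] (d : ℕ) (hd : 1 ≤ d) (V : Finset α) :
    Collapsible d V.powerset := by
  induction V using Finset.strongInduction with
  | _ V ih =>
    rcases eq_or_ne V ∅ with rfl | hV
    · rw [Finset.powerset_empty]
      refine Collapsible.step _ ∅ ?_ (by simp) ?_
      · refine ⟨Finset.mem_singleton_self _, ∅, ⟨⟨Finset.mem_singleton_self _,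
          fun ρ hρ _ => Finset.mem_singleton.1 hρ⟩, Finset.Subset.rfl⟩, ?_⟩
        rintro τ ⟨⟨hτ, _⟩, _⟩
        exact Finset.mem_singleton.1 hτ
      · have : ({∅} : Finset (Finset α)).filter (fun ρ => ¬ (∅ : Finset α) ⊆ ρ) = ∅ := by
          simp
        rw [this]; exact Collapsible.empty
    · obtain ⟨v, hv⟩ := Finset.nonempty_iff_ne_empty.2 hV
      have hfacet : IsFacet V.powerset V :=
        ⟨Finset.mem_powerset_self V, fun ρ hρ h => (Finset.mem_powerset.1 hρ).antisymm h⟩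
      refine Collapsible.step _ {v} ?_ (by simpa using hd) ?_
      · refine ⟨Finset.mem_powerset.2 (Finset.singleton_subset_iff.2 hv), V,
          ⟨hfacet, Finset.singleton_subset_iff.2 hv⟩, ?_⟩
        rintro τ ⟨⟨hτ, hmax⟩, _⟩
        exact (hmax V (Finset.mem_powerset_self V) (Finset.mem_powerset.1 hτ)).symm
      · have : V.powerset.filter (fun ρ => ¬ ({v} : Finset α) ⊆ ρ) = (V.erase v).powerset := by
          ext ρ
          simp [Finset.subset_erase, Finset.singleton_subset_iff, and_comm]
        rw [this]
        exact ih _ (Finset.erase_ssubset hv)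

lemma cone_collapse {α : Type*} [DecidableEq α] (d : ℕ) (hd : 1 ≤ d) (w : α)
    (X : Finset (Finset α)) (hX : Collapsible (d-1) X) :
    ∀ B : Finset (Finset α), (∀ ρ ∈ B, w ∉ ρ) → (∀ σ ∈ X, w ∉ σ) →
    Collapsible d B → Collapsible d (B ∪ X.image (insert w)) := by
  induction hX with
  | empty => intro B _ _ hB; simpa using hB
  | step K σ h1 h2 _ ih =>
    intro B hBw hKw hB
    obtain ⟨hσK, τ0, ⟨hτ0f, hστ0⟩, huniq⟩ := h1
    have hwσ : w ∉ σ := hKw σ hσK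
    have hmemw : ∀ ρ ∈ B ∪ K.image (insert w), w ∈ ρ →
        ∃ τ ∈ K, w ∉ τ ∧ ρ = insert w τ := by
      intro ρ hρ hw
      rcases Finset.mem_union.1 hρ with h | h
      · exact absurd hw (hBw ρ h)
      · obtain ⟨τ, hτ, rfl⟩ := Finset.mem_image.1 h
        exact ⟨τ, hτ, hKw τ hτ, rfl⟩
    have facet_cone : ∀ τ, IsFacet K τ → IsFacet (B ∪ K.image (insert w)) (insert w τ) := by
      rintro τ ⟨hτK, hmax⟩
      refine ⟨Finset.mem_union_right _ (Finset.mem_image_of_mem _ hτK), ?_⟩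
      intro ρ hρ hsub
      obtain ⟨τ', hτ'K, hwτ', rfl⟩ := hmemw ρ hρ (hsub (Finset.mem_insert_self w τ))
      have hττ' : τ ⊆ τ' := by
        intro x hx
        rcases Finset.mem_insert.1 (hsub (Finset.mem_insert_of_mem hx)) with rfl | h
        · exact absurd hx (hKw τ hτK)
        · exact h
      rw [hmax τ' hτ'K hττ']
    refine Collapsible.step _ (insert w σ) ?_ ?_ ?_
    · refine ⟨Finset.mem_union_right _ (Finset.mem_image_of_mem _ hσK),
        insert w τ0, ⟨facet_cone τ0 hτ0f, Finset.insert_subset_insert w hστ0⟩, ?_⟩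
      rintro ρ ⟨⟨hρmem, hρmax⟩, hσρ⟩
      obtain ⟨τ', hτ'K, hwτ', rfl⟩ := hmemw ρ hρmem (hσρ (Finset.mem_insert_self w σ))
      have hστ' : σ ⊆ τ' := by
        intro x hx
        rcases Finset.mem_insert.1 (hσρ (Finset.mem_insert_of_mem hx)) with rfl | h
        · exact absurd hx hwσ
        · exact h
      have hfτ' : IsFacet K τ' := by
        refine ⟨hτ'K, fun ρ'' hρ'' hs => ?_⟩
        have := hρmax (insert w ρ'') (Finset.mem_union_right _ (Finset.mem_image_of_mem _ hρ''))
          (Finset.insert_subset_insert w hs)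
        have hwρ'' : w ∉ ρ'' := hKw ρ'' hρ''
        calc ρ'' = (insert w ρ'').erase w := by rw [Finset.erase_insert hwρ'']
          _ = (insert w τ').erase w := by rw [this]
          _ = τ' := Finset.erase_insert hwτ'
      rw [huniq τ' ⟨hfτ', hστ'⟩]
    · rw [Finset.card_insert_of_notMem hwσ]
      omega
    · have hfil : (B ∪ K.image (insert w)).filter (fun ρ => ¬ insert w σ ⊆ ρ) =
          B ∪ (K.filter (fun ρ => ¬ σ ⊆ ρ)).image (insert w) := by
        ext ρ
        simp only [Finset.mem_filter, Finset.mem_union, Finset.mem_image]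
        constructor
        · rintro ⟨h | ⟨τ, hτ, rfl⟩, hns⟩
          · exact Or.inl h
          · exact Or.inr ⟨τ, ⟨hτ, fun hs => hns (Finset.insert_subset_insert w hs)⟩, rfl⟩
        · rintro (h | ⟨τ, hτ, rfl⟩)
          · refine ⟨Or.inl h, fun hs => hBw ρ h (hs (Finset.mem_insert_self w σ))⟩
          · obtain ⟨hτK, hns⟩ := hτ
            refine ⟨Or.inr ⟨τ, hτK, rfl⟩, fun hs => hns ?_⟩
            intro x hx
            rcases Finset.mem_insert.1 (hs (Finset.mem_insert_of_mem hx)) with rfl | h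
            · exact absurd hx hwσ
            · exact h
      rw [hfil]
      exact ih B hBw (fun σ' hσ' => hKw σ' (Finset.mem_filter.1 hσ').1) hB


/-- if each Δ_w is (d−1)-collapsible on vertex set V, then
2^V ∪ ⋃_{w∈W} (Δ_w ∗ w) is d-collapsible. -/
theorem cones_union_simplex_collapsible {α : Type*} [DecidableEq α] (d : ℕ) (hd : 1 ≤ d)
    (V W : Finset α) (hVW : Disjoint V W) (Δ : α → Finset (Finset α))
    (hcx : ∀ w ∈ W, IsComplex (Δ w))
    (hsub : ∀ w ∈ W, ∀ σ ∈ Δ w, σ ⊆ V)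
    (hcol : ∀ w ∈ W, Collapsible (d - 1) (Δ w)) :
    Collapsible d
      (V.powerset ∪ W.biUnion (fun w => Δ w ∪ (Δ w).image (insert w))) := by
  have key : V.powerset ∪ W.biUnion (fun w => Δ w ∪ (Δ w).image (insert w)) =
      V.powerset ∪ W.biUnion (fun w => (Δ w).image (insert w)) := by
    ext x
    simp only [Finset.mem_union, Finset.mem_biUnion, Finset.mem_powerset]
    constructor
    · rintro (h | ⟨w, hw, h | h⟩)
      · exact Or.inl h
      · exact Or.inl (hsub w hw x h)
      · exact Or.inr ⟨w, hw, h⟩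
    · rintro (h | ⟨w, hw, h⟩)
      · exact Or.inl h
      · exact Or.inr ⟨w, hw, Or.inr h⟩
  rw [key]
  suffices H : ∀ W' : Finset α, W' ⊆ W →
      Collapsible d (V.powerset ∪ W'.biUnion (fun w => (Δ w).image (insert w))) from
    H W Finset.Subset.rfl
  intro W'
  induction W' using Finset.induction_on with
  | empty => intro _; simpa using powerset_collapsible d hd V
  | @insert w s hws ih =>
    intro hsubW
    have hwW : w ∈ W := hsubW (Finset.mem_insert_self w s)
    have hwV : w ∉ V := Finset.disjoint_right.1 hVW hwW
    have heq : V.powerset ∪ (insert w s).biUnion (fun w => (Δ w).image (insert w)) =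
        (V.powerset ∪ s.biUnion (fun w => (Δ w).image (insert w))) ∪ (Δ w).image (insert w) := by
      rw [Finset.biUnion_insert]
      ext x
      simp only [Finset.mem_union]
      tauto
    rw [heq]
    refine cone_collapse d hd w (Δ w) (hcol w hwW) _ ?_ ?_ (ih (fun x hx => hsubW (Finset.mem_insert_of_mem hx)))
    · intro ρ hρ
      rcases Finset.mem_union.1 hρ with h | h
      · exact fun hw => hwV (Finset.mem_powerset.1 h hw)
      · obtain ⟨w', hw's, h⟩ := Finset.mem_biUnion.1 h
        obtain ⟨τ, hτ, rfl⟩ := Finset.mem_image.1 h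
        intro hw
        rcases Finset.mem_insert.1 hw with rfl | hw
        · exact hws hw's
        · exact hwV (hsub w' (hsubW (Finset.mem_insert_of_mem hw's)) τ hτ hw)
    · intro σ hσ hw
      exact hwV (hsub w hwW σ hσ hw)
end

section
/- For all integers d ≥ 2 and 0 ≤ m ≤ n, the number f_d(n) of d-representable simplicial complexes on vertex set [n] satisfies f_d(n) ≥ f_{d−1}(m)^{n−m}. -/
/-- `numRep d n` is the number f_d(n) of d-representable simplicial complexes on the
vertex set [n], i.e. of nerves of n-tuples of convex sets in ℝ^d. -/
noncomputable def numRep (d n : ℕ) : ℕ :=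
  Set.ncard {K : Set (Finset (Fin n)) |
    ∃ C : Fin n → Set (Fin d → ℝ), (∀ i, Convex ℝ (C i)) ∧
      ∀ σ : Finset (Fin n), σ ∈ K ↔ (⋂ i ∈ σ, C i).Nonempty}

/-!
Realize the `n - m` complexes `Δ_w` on `V = [m]` by convex sets in `ℝ^(d-1)`; replacing each set
by the convex hull of finitely many witness points makes a fixed coordinate bounded on all of
them. Copy the realization of `Δ_w` by an affine chart into the hyperplane `H_w` of `ℝ^d` tangent
to the parabolic cylinder `t = x₁²` along `x₁ = a_w`, with the `a_w` far apart. Vertex `v ∈ V`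
gets the convex hull of its `n - m` copies and vertex `w` gets `H_w`. By convexity of the
cylinder every other copy lies strictly on one side of `H_w`, so the hull of `v` meets `H_w`
exactly in the `w`-th copy, and the link of `w` restricted to `V` is `Δ_w`. Hence the tuple
`(Δ_w)` is recovered from a `d`-representable complex on `[n]`.
-/

open Set

variable {ι E F : Type*} [AddCommGroup E] [Module ℝ E] [AddCommGroup F] [Module ℝ F]

def nerve (C : ι → Set E) : Set (Finset ι) := {σ | (⋂ i ∈ σ, C i).Nonempty}

variable (E) in
def IsConvexNerve (K : Set (Finset ι)) : Prop :=
  ∃ C : ι → Set E, (∀ i, Convex ℝ (C i)) ∧ K = nerve C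

lemma numRep_eq_ncard (d n : ℕ) :
    numRep d n = {K : Set (Finset (Fin n)) | IsConvexNerve (Fin d → ℝ) K}.ncard := by
  simp only [numRep, IsConvexNerve, nerve, Set.ext_iff, Set.mem_ofPred_eq]

lemma IsConvexNerve.map {K : Set (Finset ι)} (hK : IsConvexNerve E K) (e : E ≃ₗ[ℝ] F) :
    IsConvexNerve F K := by
  obtain ⟨C, hC, rfl⟩ := hK
  refine ⟨fun i => e '' C i, fun i => (hC i).linear_image e.toLinearMap, ?_⟩
  ext σ
  simp only [nerve, mem_ofPred_eq, ← image_iInter₂ e.bijective, image_nonempty]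

lemma IsConvexNerve.exists_finite_convexHull [Finite ι] {K : Set (Finset ι)}
    (hK : IsConvexNerve E K) :
    ∃ P : ι → Set E, (∀ i, (P i).Finite) ∧ K = nerve fun i => convexHull ℝ (P i) := by
  obtain ⟨C, hC, rfl⟩ := hK
  refine ⟨fun i => range fun σ : {σ // σ ∈ nerve C ∧ i ∈ σ} => σ.2.1.some,
    fun i => finite_range _, ?_⟩
  ext σ
  constructor
  · intro hσ
    exact ⟨hσ.some, mem_iInter₂.2 fun i hi => subset_convexHull ℝ _ ⟨⟨σ, hσ, hi⟩, rfl⟩⟩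
  · refine fun ⟨x, hx⟩ => ⟨x, mem_iInter₂.2 fun i hi => ?_⟩
    refine convexHull_min ?_ (hC i) (mem_iInter₂.1 hx i hi)
    rintro _ ⟨⟨τ, hτ, hiτ⟩, rfl⟩
    exact mem_iInter₂.1 hτ.some_mem i hiτ

lemma Convex.union_setOf_lt {f : E →ₗ[ℝ] ℝ} {c : ℝ} {A : Set E} (hA : Convex ℝ A)
    (hAf : ∀ x ∈ A, f x = c) : Convex ℝ (A ∪ {x | f x < c}) := by
  have hle : ∀ x ∈ A ∪ {x | f x < c}, f x ≤ c := by
    rintro x (hx | hx)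
    exacts [(hAf x hx).le, le_of_lt hx]
  rw [convex_iff_pairwise_pos]
  intro x hx y hy _ a b ha hb hab
  by_cases hxy : x ∈ A ∧ y ∈ A
  · exact Or.inl (hA hxy.1 hxy.2 ha.le hb.le hab)
  · right
    have hstrict : f x < c ∨ f y < c := by
      rcases hx with hx | hx <;> rcases hy with hy | hy <;> simp_all
    simp only [mem_ofPred_eq, map_add, map_smul, smul_eq_mul]
    have hc : c = a * c + b * c := by rw [← add_mul, hab, one_mul]
    rcases hstrict with h | h
    · linarith [mul_lt_mul_of_pos_left h ha, mul_le_mul_of_nonneg_left (hle y hy) hb.le]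
    · linarith [mul_le_mul_of_nonneg_left (hle x hx) ha.le, mul_lt_mul_of_pos_left h hb]

lemma two_mul_mul_lt_sq {δ t r : ℝ} (ht : t ∈ Icc (-r) r) (hδ : 2 * r < |δ|) :
    2 * δ * t < δ ^ 2 := by
  have htr : |t| ≤ r := abs_le.2 ht
  nlinarith [abs_mul_abs_self δ, le_abs_self (δ * t), abs_mul δ t, abs_nonneg δ, abs_nonneg t]

section Tangent

variable (g : E →ₗ[ℝ] ℝ) (v : E)

/-- For `g v = 1`, this chart maps `E` onto the hyperplane `tangentFunctional g a = a ^ 2` of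
`ℝ × E`, which is tangent to the parabolic cylinder `t = (g p) ^ 2` along `g p = a`. -/
def tangentChart (a : ℝ) : E →ᵃ[ℝ] ℝ × E where
  toFun q := (2 * a * g q + a ^ 2, q + a • v)
  linear := LinearMap.prod ((2 * a) • g) LinearMap.id
  map_vadd' q p := by
    ext
    · simp only [vadd_eq_add, map_add, LinearMap.prod_apply, Function.prod, LinearMap.smul_apply,
        smul_eq_mul, LinearMap.id_coe, id_eq, Prod.mk_add_mk]
      ring
    · simp only [vadd_eq_add, LinearMap.prod_apply, Function.prod, LinearMap.id_coe, id_eq,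
        Prod.mk_add_mk]
      abel

def tangentFunctional (a : ℝ) : ℝ × E →ₗ[ℝ] ℝ :=
  (2 * a) • (g ∘ₗ LinearMap.snd ℝ ℝ E) - LinearMap.fst ℝ ℝ E

lemma tangentChart_injective (a : ℝ) : Function.Injective (tangentChart g v a) :=
  fun _ _ h => add_right_cancel (congrArg Prod.snd h)

variable {g v}

lemma tangentFunctional_tangentChart (hv : g v = 1) (a b : ℝ) (q : E) :
    tangentFunctional g b (tangentChart g v a q) = b ^ 2 - (b - a) ^ 2 + 2 * (b - a) * g q := by
  simp only [tangentFunctional, tangentChart, AffineMap.coe_mk, LinearMap.sub_apply,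
    LinearMap.smul_apply, LinearMap.coe_comp, LinearMap.coe_snd, Function.comp_apply, map_add,
    map_smul, hv, smul_eq_mul, mul_one, LinearMap.fst_apply]
  ring

lemma tangentChart_mem_convexHull_iUnion_iff {W : Type*} (hv : g v = 1) {a : W → ℝ} {r : ℝ}
    (ha : ∀ w w', w ≠ w' → 2 * r < |a w - a w'|) {D : W → Set E}
    (hDc : ∀ w, Convex ℝ (D w)) (hDg : ∀ w, D w ⊆ g ⁻¹' Icc (-r) r) (w : W) (q : E) :
    tangentChart g v (a w) q ∈ convexHull ℝ (⋃ w', tangentChart g v (a w') '' D w') ↔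
      q ∈ D w := by
  refine ⟨fun hq => ?_, fun hq => subset_convexHull ℝ _ (mem_iUnion.2 ⟨w, mem_image_of_mem _ hq⟩)⟩
  have hsub : convexHull ℝ (⋃ w', tangentChart g v (a w') '' D w') ⊆
      tangentChart g v (a w) '' D w ∪ {x | tangentFunctional g (a w) x < a w ^ 2} := by
    refine convexHull_min (iUnion_subset fun w' => ?_)
      (((hDc w).affine_image _).union_setOf_lt ?_)
    · rcases eq_or_ne w' w with rfl | hw'
      · exact subset_union_left
      · rintro _ ⟨p, hp, rfl⟩
        right
        simp only [mem_ofPred_eq, tangentFunctional_tangentChart hv]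
        linarith [two_mul_mul_lt_sq (hDg w' hp) (ha w w' hw'.symm)]
    · rintro _ ⟨p, -, rfl⟩
      simp [tangentFunctional_tangentChart hv]
  rcases hsub hq with ⟨p, hp, hpq⟩ | hlt
  · rwa [← tangentChart_injective g v _ hpq]
  · simp [tangentFunctional_tangentChart hv] at hlt

end Tangent

def restrictedLink {V : Type*} [DecidableEq ι] (K : Set (Finset ι)) (e : V ↪ ι) (u : ι) :
    Set (Finset V) :=
  {σ | insert u (σ.map e) ∈ K}

section Construction

variable {g : E →ₗ[ℝ] ℝ} {v : E} {m l : ℕ}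

lemma exists_isConvexNerve_restrictedLink_eq_nerve (hv : g v = 1) {a : Fin l → ℝ} {r : ℝ}
    (ha : ∀ w w', w ≠ w' → 2 * r < |a w - a w'|) {D : Fin l → Fin m → Set E}
    (hDc : ∀ w i, Convex ℝ (D w i)) (hDg : ∀ w i, D w i ⊆ g ⁻¹' Icc (-r) r) :
    ∃ K, IsConvexNerve (ℝ × E) K ∧
      ∀ w, restrictedLink K (Fin.castAddEmb l) (Fin.natAdd m w) = nerve (D w) := by
  let C : Fin (m + l) → Set (ℝ × E) := Fin.addCases
    (fun i => convexHull ℝ (⋃ w, tangentChart g v (a w) '' D w i))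
    (fun w => range (tangentChart g v (a w)))
  have hC (j : Fin (m + l)) : Convex ℝ (C j) := by
    induction j using Fin.addCases with
    | left i => simpa [C] using convex_convexHull ℝ (⋃ w, tangentChart g v (a w) '' D w i)
    | right w => simpa [C] using convex_univ.affine_image (tangentChart g v (a w))
  refine ⟨nerve C, ⟨C, hC, rfl⟩, fun w => ?_⟩
  have hmem (i : Fin m) (q : E) := tangentChart_mem_convexHull_iUnion_iff hv ha
    (fun w => hDc w i) (fun w => hDg w i) w q
  ext σ
  simp only [restrictedLink, nerve, mem_ofPred_eq, Finset.set_biInter_insert, Finset.map_eq_image,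
    Finset.set_biInter_finset_image, Fin.castAddEmb_apply, C, Fin.addCases_left,
    Fin.addCases_right]
  constructor
  · rintro ⟨_, ⟨q, rfl⟩, hq⟩
    exact ⟨q, mem_iInter₂.2 fun i hi => (hmem i q).1 (mem_iInter₂.1 hq i hi)⟩
  · rintro ⟨q, hq⟩
    exact ⟨_, ⟨q, rfl⟩, mem_iInter₂.2 fun i hi => (hmem i q).2 (mem_iInter₂.1 hq i hi)⟩

lemma exists_isConvexNerve_restrictedLink_eq (hv : g v = 1)
    {K : Fin l → Set (Finset (Fin m))} (hK : ∀ w, IsConvexNerve E (K w)) :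
    ∃ K', IsConvexNerve (ℝ × E) K' ∧
      ∀ w, restrictedLink K' (Fin.castAddEmb l) (Fin.natAdd m w) = K w := by
  choose P hPfin hP using fun w => (hK w).exists_finite_convexHull
  obtain ⟨r, hr⟩ := ((finite_iUnion fun w => finite_iUnion (hPfin w)).image
    fun x => |g x|).bddAbove
  have hPg (w : Fin l) (i : Fin m) : convexHull ℝ (P w i) ⊆ g ⁻¹' Icc (-r) r :=
    convexHull_min (fun x hx => abs_le.1 (hr ⟨x, mem_iUnion₂.2 ⟨w, i, hx⟩, rfl⟩))
      ((convex_Icc _ _).linear_preimage g)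
  have hsep (w w' : Fin l) (hw : w ≠ w') :
      2 * r < |(2 * |r| + 1) * (w : ℕ) - (2 * |r| + 1) * (w' : ℕ)| := by
    have h1 : (1 : ℝ) ≤ |((w : ℕ) : ℝ) - (w' : ℕ)| := by
      exact_mod_cast Int.one_le_abs (z := (w : ℤ) - (w' : ℤ)) (by omega)
    rw [← mul_sub, abs_mul, abs_of_pos (by positivity)]
    nlinarith [le_abs_self r,
      mul_le_mul_of_nonneg_left h1 (by positivity : (0 : ℝ) ≤ 2 * |r| + 1)]
  obtain ⟨K', hK', hlink⟩ := exists_isConvexNerve_restrictedLink_eq_nerve hv hsep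
    (fun w i => convex_convexHull ℝ (P w i)) hPg
  exact ⟨K', hK', fun w => (hlink w).trans (hP w).symm⟩

end Construction

lemma ncard_univ_pi [Fintype ι] {α : ι → Type*} (s : ∀ i, Set (α i)) :
    (Set.pi univ s).ncard = ∏ i, (s i).ncard := by
  simp only [← Nat.card_coe_set_eq, Nat.card_congr (Equiv.Set.univPi s), Nat.card_pi]

/-- for d ≥ 2 and 0 ≤ m ≤ n, f_d(n) ≥ f_{d−1}(m)^{n−m}. -/
theorem numRep_lower (d m n : ℕ) (hd : 2 ≤ d) (hmn : m ≤ n) :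
    numRep (d - 1) m ^ (n - m) ≤ numRep d n := by
  obtain ⟨k, rfl⟩ : ∃ k, d = k + 2 := ⟨d - 2, by omega⟩
  obtain ⟨l, rfl⟩ := Nat.exists_eq_add_of_le hmn
  rw [Nat.add_sub_cancel_left, show k + 2 - 1 = k + 1 from rfl, numRep_eq_ncard, numRep_eq_ncard]
  set S := {K : Set (Finset (Fin (m + l))) | IsConvexNerve (Fin (k + 2) → ℝ) K}
  set T := {K : Set (Finset (Fin m)) | IsConvexNerve (Fin (k + 1) → ℝ) K}
  have hlinks : Set.pi univ (fun _ => T) ⊆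
      (fun K w => restrictedLink K (Fin.castAddEmb l) (Fin.natAdd m w)) '' S := by
    intro K hK
    obtain ⟨K', hK', hlink⟩ := exists_isConvexNerve_restrictedLink_eq
      (g := LinearMap.proj 0) (v := Pi.single 0 1) (by simp) (mem_univ_pi.1 hK)
    exact ⟨K', hK'.map (Fin.consLinearEquiv ℝ fun _ => ℝ), funext hlink⟩
  calc T.ncard ^ l = (Set.pi univ fun _ : Fin l => T).ncard := by simp [ncard_univ_pi]
    _ ≤ _ := ncard_le_ncard hlinks (toFinite _)
    _ ≤ S.ncard := ncard_image_le (toFinite _)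
end

section
/- There are at least 2^{⌊n/2⌋·⌈n/2⌉} labeled chordal graphs on vertex set [n]; in particular at least 2^{n²/4} when n is even. -/
/-!
In a split graph, with clique `K` and independent set `Kᶜ`, every edge meets `K` and any two
vertices of `K` are adjacent. Along an induced cycle of length at least 4, take five consecutive
vertices `a b c d e`: the edge `bc` forces `b ∈ K` or `c ∈ K`, while the non-edges `ac`, `bd`, `ce`
forbid two vertices at distance two from both lying in `K`; either choice leads to a contradiction.
Fixing `K` and choosing the edges between `K` and `Kᶜ` freely gives `2 ^ (|K| * |Kᶜ|)` distinct
split graphs, and `K` is taken to be the first `⌈n/2⌉` vertices.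
-/

/-- `G` has no induced cycle of length at least 4, i.e. `G` is chordal. -/
def NoInducedLongCycle {V : Type*} (G : SimpleGraph V) : Prop :=
  ∀ m : ℕ, 4 ≤ m →
    ¬ ∃ f : Fin m → V, Function.Injective f ∧
      ∀ i j : Fin m, G.Adj (f i) (f j) ↔
        ((i.val + 1) % m = j.val ∨ (j.val + 1) % m = i.val)

namespace SimpleGraph

variable {V : Type*} {G : SimpleGraph V}

/-- The walk need not be a path: for `m = 4` it closes up, `e = a`. -/
lemma exists_walk_of_induced_cycle {m : ℕ} (hm : 4 ≤ m) {f : Fin m → V}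
    (hf : Function.Injective f)
    (hcyc : ∀ i j : Fin m,
      G.Adj (f i) (f j) ↔ ((i.val + 1) % m = j.val ∨ (j.val + 1) % m = i.val)) :
    ∃ a b c d e, G.Adj a b ∧ G.Adj b c ∧ G.Adj c d ∧ G.Adj d e ∧
      Gᶜ.Adj a c ∧ Gᶜ.Adj b d ∧ Gᶜ.Adj c e := by
  have adj {i j : Fin m} (h : (i.val + 1) % m = j.val) : G.Adj (f i) (f j) :=
    (hcyc i j).2 (Or.inl h)
  have compl_adj {i j : Fin m} (hij : i ≠ j)
      (h : ¬((i.val + 1) % m = j.val ∨ (j.val + 1) % m = i.val)) : Gᶜ.Adj (f i) (f j) :=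
    (compl_adj G _ _).2 ⟨hf.ne hij, (hcyc i j).not.2 h⟩
  obtain rfl | hm := hm.eq_or_lt
  · exact ⟨f 0, f 1, f 2, f 3, f 0, adj (by decide), adj (by decide), adj (by decide),
      adj (by decide), compl_adj (by decide) (by decide), compl_adj (by decide) (by decide),
      compl_adj (by decide) (by decide)⟩
  · have hmod (k : ℕ) (hk : k < m) : k % m = k := Nat.mod_eq_of_lt hk
    have h5 : (4 + 1) % m ≠ 2 := by
      obtain rfl | h6 := Nat.lt_iff_add_one_le.1 hm |>.eq_or_lt
      · decide
      · rw [hmod 5 h6]; decide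
    let v (k : ℕ) (hk : k < m) : V := f ⟨k, hk⟩
    refine ⟨v 0 (by omega), v 1 (by omega), v 2 (by omega), v 3 (by omega), v 4 (by omega),
      adj ?_, adj ?_, adj ?_, adj ?_, compl_adj ?_ ?_, compl_adj ?_ ?_, compl_adj ?_ ?_⟩ <;>
    simp only [ne_eq, Fin.ext_iff, hmod _ (show 1 < m by omega), hmod _ (show 3 < m by omega),
      hmod _ (show 4 < m by omega), hmod _ (show 2 < m by omega)] <;>
    omega

lemma not_walk_of_isClique_of_isIndepSet_compl {K : Set V} (hK : G.IsClique K)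
    (hKc : G.IsIndepSet Kᶜ) {a b c d e : V} (hab : G.Adj a b) (hbc : G.Adj b c) (hcd : G.Adj c d)
    (hde : G.Adj d e) (hac : Gᶜ.Adj a c) (hbd : Gᶜ.Adj b d) (hce : Gᶜ.Adj c e) : False := by
  have edge {x y : V} (h : G.Adj x y) : x ∈ K ∨ y ∈ K := by
    by_contra! hxy
    exact hKc hxy.1 hxy.2 h.ne h
  have non_edge {x y : V} (h : Gᶜ.Adj x y) : ¬(x ∈ K ∧ y ∈ K) := fun hxy =>
    h.2 (hK hxy.1 hxy.2 h.1)
  have := edge hab; have := edge hbc; have := edge hcd; have := edge hde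
  have := non_edge hac; have := non_edge hbd; have := non_edge hce
  tauto

theorem noInducedLongCycle_of_isClique_of_isIndepSet_compl {K : Set V} (hK : G.IsClique K)
    (hKc : G.IsIndepSet Kᶜ) : NoInducedLongCycle G := by
  rintro m hm ⟨f, hf, hcyc⟩
  obtain ⟨a, b, c, d, e, hab, hbc, hcd, hde, hac, hbd, hce⟩ :=
    exists_walk_of_induced_cycle hm hf hcyc
  exact not_walk_of_isClique_of_isIndepSet_compl hK hKc hab hbc hcd hde hac hbd hce

def splitGraph (K : Set V) (S : Set (K × ↥Kᶜ)) : SimpleGraph V :=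
  fromRel fun u v => (u ∈ K ∧ v ∈ K) ∨ ∃ p ∈ S, u = p.1 ∧ v = p.2

lemma isClique_splitGraph (K : Set V) (S : Set (K × ↥Kᶜ)) : (splitGraph K S).IsClique K :=
  fun _ hu _ hv huv => (fromRel_adj _ _ _).2 ⟨huv, Or.inl (Or.inl ⟨hu, hv⟩)⟩

lemma isIndepSet_compl_splitGraph (K : Set V) (S : Set (K × ↥Kᶜ)) :
    (splitGraph K S).IsIndepSet Kᶜ := by
  rintro u hu v hv - huv
  obtain ⟨-, ⟨⟨hu', -⟩ | ⟨p, -, rfl, -⟩⟩ | ⟨⟨hv', -⟩ | ⟨p, -, rfl, -⟩⟩⟩ := (fromRel_adj _ _ _).1 huv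
  exacts [hu hu', hu p.1.2, hv hv', hv p.1.2]

lemma splitGraph_adj_iff_mem {K : Set V} {S : Set (K × ↥Kᶜ)} (p : K × ↥Kᶜ) :
    (splitGraph K S).Adj p.1 p.2 ↔ p ∈ S := by
  refine ⟨fun h => ?_, fun hp => (fromRel_adj _ _ _).2 ⟨?_, Or.inl (Or.inr ⟨p, hp, rfl, rfl⟩)⟩⟩
  · obtain ⟨-, ⟨⟨-, h2⟩ | ⟨q, hq, h1, h2⟩⟩ | ⟨⟨h2, -⟩ | ⟨q, -, h2, -⟩⟩⟩ := (fromRel_adj _ _ _).1 h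
    · exact absurd h2 p.2.2
    · rwa [Prod.ext (Subtype.ext h1) (Subtype.ext h2)]
    · exact absurd h2 p.2.2
    · exact absurd (h2 ▸ q.1.2) p.2.2
  · exact fun h => p.2.2 (h ▸ p.1.2)

lemma splitGraph_injective (K : Set V) : Function.Injective (splitGraph K) := fun S T hST =>
  Set.ext fun p => by rw [← splitGraph_adj_iff_mem, ← splitGraph_adj_iff_mem, hST]

theorem two_pow_le_ncard_noInducedLongCycle [Finite V] (K : Set V) :
    2 ^ (K.ncard * Kᶜ.ncard) ≤ {G : SimpleGraph V | NoInducedLongCycle G}.ncard := by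
  have := Fintype.ofFinite V
  classical
  calc 2 ^ (K.ncard * Kᶜ.ncard) = Nat.card (Set (K × ↥Kᶜ)) := by
        rw [Nat.card_eq_fintype_card, Fintype.card_set, Fintype.card_prod,
          ← Nat.card_eq_fintype_card, ← Nat.card_eq_fintype_card, Nat.card_coe_set_eq,
          Nat.card_coe_set_eq]
    _ = (Set.range (splitGraph K)).ncard :=
        (Set.ncard_range_of_injective (splitGraph_injective K)).symm
    _ ≤ _ := Set.ncard_le_ncard <| Set.range_subset_iff.2 fun S =>
        noInducedLongCycle_of_isClique_of_isIndepSet_compl (isClique_splitGraph K S)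
          (isIndepSet_compl_splitGraph K S)

end SimpleGraph

/-- there are at least 2^(⌊n/2⌋·⌈n/2⌉) labeled chordal graphs on [n]. -/
theorem chordal_count_lower (n : ℕ) :
    2 ^ (n / 2 * ((n + 1) / 2)) ≤
      Set.ncard {G : SimpleGraph (Fin n) | NoInducedLongCycle G} := by
  set K : Set (Fin n) := {v | (v : ℕ) < (n + 1) / 2}
  have hK : K.ncard = (n + 1) / 2 := by
    rw [← Nat.card_coe_set_eq, Nat.card_eq_fintype_card]
    exact Fintype.card_fin_lt_of_le (by omega)
  have hKc : Kᶜ.ncard = n / 2 := by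
    rw [Set.ncard_compl, hK, Nat.card_fin]
    omega
  have := SimpleGraph.two_pow_le_ncard_noInducedLongCycle K
  rwa [hK, hKc, mul_comm] at this
end

section
/- In the injection from interval orders to interval graphs, the neighborhoods of the 'currently active' vertices are totally ordered by containment: let L, R : [n−1] → [2n−2] be a compressed representation, define J_i = [L(i), R(i)+2], and for fixed i let A = {v : L(v) ≤ 2i−1 and R(v) ≥ 2i}. Then for u, v ∈ A, if R(u) ≤ R(v) then the neighborhood of u in the interval graph of {J_w : R(w) ≥ 2i} is contained in the neighborhood of v. -/
/-- for a compressed representation L, R : [n−1] → [2n−2] with stretched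
intervals J_v = [L(v), R(v)+2], and A = {v : L(v) ≤ 2i−1, R(v) ≥ 2i}, the (closed)
neighborhoods in the interval graph G_i of {J_w : R(w) ≥ 2i} of the vertices of A are
totally ordered by containment: if u, v ∈ A and R(u) ≤ R(v), then the neighborhood of
u is contained in the neighborhood of v. -/
theorem active_neighborhoods_nested (n i : ℕ) (hn : 1 ≤ n) (hi : 1 ≤ i)
    (L R : Fin (n - 1) → ℕ)
    (hodd : ∀ v, Odd (L v)) (heven : ∀ v, Even (R v))
    (hLR : ∀ v, L v < R v) (hub : ∀ v, R v ≤ 2 * n - 2)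
    (u v : Fin (n - 1))
    (hu : L u ≤ 2 * i - 1 ∧ 2 * i ≤ R u)
    (hv : L v ≤ 2 * i - 1 ∧ 2 * i ≤ R v)
    (hRuv : R u ≤ R v) :
    {w : Fin (n - 1) | 2 * i ≤ R w ∧
        (Set.Icc (L u) (R u + 2) ∩ Set.Icc (L w) (R w + 2)).Nonempty} ⊆
      {w : Fin (n - 1) | 2 * i ≤ R w ∧
        (Set.Icc (L v) (R v + 2) ∩ Set.Icc (L w) (R w + 2)).Nonempty} := by
  intro w hw
  obtain ⟨hwR, hne⟩ := hw
  have h1 : L w ≤ R u + 2 := by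
    obtain ⟨x, ⟨hx1, hx2⟩, hx3, hx4⟩ := hne
    omega
  have h2 := hLR w
  have h3 := hLR v
  refine ⟨hwR, ⟨max (L v) (L w), ?_⟩⟩
  simp only [Set.mem_inter_iff, Set.mem_Icc, le_max_iff, max_le_iff]
  omega
end
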